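/- If H and H' are two vertex-disjoint global amoebas, then their disjoint union H ∪ H' is also a global amoeba. -/

import Mathlib

open SimpleGraph Equiv

/-- The labeled copy `G_σ`, with edges `v_{σ⁻¹ i} v_{σ⁻¹ j}` for edges `v_i v_j` of `G`. -/
def copyG {V : Type*} (G : SimpleGraph V) (σ : Equiv.Perm V) : SimpleGraph V where
  Adj a b := G.Adj (σ a) (σ b)
  symm := ⟨fun _ _ h => G.adj_symm h⟩
  loopless := ⟨fun _ h => G.irrefl h⟩

/-- The graph `G - v_r v_s + v_k v_l`. -/
def replaceG {V : Type*} (G : SimpleGraph V) (r s k l : V) : SimpleGraph V :=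
  SimpleGraph.fromEdgeSet ((G.edgeSet \ {s(r, s)}) ∪ {s(k, l)})

/-- The edge-replacement `rs → kl` is feasible: `v_r v_s ∈ E(G)`, `v_k v_l` is a non-edge or
`{k,l} = {r,s}`, and `G - v_r v_s + v_k v_l ≅ G`. -/
def IsFeasible {V : Type*} (G : SimpleGraph V) (r s k l : V) : Prop :=
  G.Adj r s ∧ (Gᶜ.Adj k l ∨ s(k, l) = s(r, s)) ∧ Nonempty (replaceG G r s k l ≃g G)

/-- The permutations realizing feasible edge-replacements of `G`. -/
def feasiblePerms {V : Type*} (G : SimpleGraph V) : Set (Equiv.Perm V) :=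
  {σ | ∃ r s k l, IsFeasible G r s k l ∧ copyG G σ = replaceG G r s k l}

/-- The group `S_G` generated by all permutations realizing feasible edge-replacements. -/
def ampGroup {V : Type*} (G : SimpleGraph V) : Subgroup (Equiv.Perm V) :=
  Subgroup.closure (feasiblePerms G)

/-- `G` is a local amoeba if `S_G` is the full symmetric group. -/
def LocalAmoeba {V : Type*} (G : SimpleGraph V) : Prop := ampGroup G = ⊤

/-- Disjoint union of two graphs. -/
def sumGraph {V W : Type*} (H : SimpleGraph V) (H' : SimpleGraph W) : SimpleGraph (V ⊕ W) :=
  SimpleGraph.map Sum.inl H ⊔ SimpleGraph.map Sum.inr H'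

/-- `G` together with `t` additional isolated vertices. -/
def addIsolated {V : Type*} (G : SimpleGraph V) (t : ℕ) : SimpleGraph (V ⊕ Fin t) :=
  sumGraph G (⊥ : SimpleGraph (Fin t))

/-- `G` is a global amoeba if `G ∪ tK₁` is a local amoeba for all sufficiently large `t`. -/
def GlobalAmoeba {V : Type*} (G : SimpleGraph V) : Prop :=
  ∃ T : ℕ, ∀ t ≥ T, LocalAmoeba (addIsolated G t)

/-! Put `G = (H ∪ H') ∪ tK₁` with `t ≥ 2` beyond both thresholds. `H ∪ tK₁` is a union of
components of `G`, so its feasible replacements stay feasible in `G`; hence `S_G` contains every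
transposition of the vertices of `H ∪ tK₁` and of `H' ∪ tK₁`, and since these vertex sets share
the isolated vertices, conjugation yields all transpositions.

Transpositions only generate finitary permutations, so we also use that an amoeba with an
isolated vertex has finite support: every element of `S_G` changes only finitely many edges,
whereas infinite support (with all degrees finite, by swapping a vertex with an isolated one)
yields infinitely many mutually non-adjacent edges `aₙbₙ`, all destroyed by a single
permutation of the `bₙ`. Then any `π` agrees on the finite support of `G` with a product `μ` of
transpositions, and `μ⁻¹π` fixes the support, so it is an automorphism of `G`, realized by the
trivial replacement of an edge by itself. -/

open scoped symmDiff

section Transport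

variable {α β : Type*} {G : SimpleGraph α} {G' : SimpleGraph β}

@[simp] lemma copyG_adj (G : SimpleGraph α) (σ : Perm α) (a b : α) :
    (copyG G σ).Adj a b ↔ G.Adj (σ a) (σ b) := Iff.rfl

lemma replaceG_adj (G : SimpleGraph α) (r s k l x y : α) :
    (replaceG G r s k l).Adj x y ↔
      ((G.Adj x y ∧ s(x, y) ≠ s(r, s)) ∨ s(x, y) = s(k, l)) ∧ x ≠ y := by
  simp only [replaceG, fromEdgeSet_adj, Set.mem_union, Set.mem_sdiff, Set.mem_singleton_iff,
    mem_edgeSet]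

def SimpleGraph.Iso.replaceG (e : G ≃g G') (r s k l : α) :
    _root_.replaceG G r s k l ≃g _root_.replaceG G' (e r) (e s) (e k) (e l) where
  toEquiv := e.toEquiv
  map_rel_iff' {x y} := by
    simp [replaceG_adj, e.map_adj_iff]

@[simp] lemma SimpleGraph.Iso.replaceG_apply (e : G ≃g G') (r s k l x : α) :
    e.replaceG r s k l x = e x := rfl

lemma IsFeasible.map (e : G ≃g G') {r s k l : α} (h : IsFeasible G r s k l) :
    IsFeasible G' (e r) (e s) (e k) (e l) := by
  obtain ⟨hrs, hkl, ⟨f⟩⟩ := h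
  refine ⟨e.map_adj_iff.2 hrs, ?_, ⟨(e.replaceG r s k l).symm.trans (f.trans e)⟩⟩
  simpa [e.map_adj_iff] using hkl

lemma permCongr_mem_feasiblePerms (e : G ≃g G') {σ : Perm α} (hσ : σ ∈ feasiblePerms G) :
    e.toEquiv.permCongr σ ∈ feasiblePerms G' := by
  obtain ⟨r, s, k, l, hf, hcopy⟩ := hσ
  refine ⟨e r, e s, e k, e l, hf.map e, ?_⟩
  ext x y
  have hxy := congrArg (fun X : SimpleGraph α => X.Adj (e.symm x) (e.symm y)) hcopy
  simp only [copyG_adj, eq_iff_iff] at hxy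
  change G'.Adj (e (σ (e.symm x))) (e (σ (e.symm y))) ↔ _
  rw [e.map_adj_iff, hxy, ← (e.replaceG r s k l).map_adj_iff]
  simp

lemma ampGroup_map_le {f : Perm α →* Perm β}
    (hf : ∀ σ ∈ feasiblePerms G, f σ ∈ feasiblePerms G') :
    (ampGroup G).map f ≤ ampGroup G' := by
  rw [ampGroup, MonoidHom.map_closure]
  exact Subgroup.closure_mono (Set.image_subset_iff.2 hf)

lemma permCongr_mem_ampGroup (e : G ≃g G') {σ : Perm α} (hσ : σ ∈ ampGroup G) :
    e.toEquiv.permCongr σ ∈ ampGroup G' :=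
  ampGroup_map_le (f := e.toEquiv.permCongrHom.toMonoidHom)
    (fun _ h => permCongr_mem_feasiblePerms e h) ⟨σ, hσ, rfl⟩

end Transport

section Sum

variable {α β γ : Type*}

lemma sumGraph_eq_sum (A : SimpleGraph α) (B : SimpleGraph β) : sumGraph A B = A ⊕g B := by
  ext (a | b) (a' | b') <;> simp [sumGraph, map_adj'] <;> exact Adj.ne

lemma addIsolated_eq_sum (G : SimpleGraph α) (t : ℕ) : addIsolated G t = G ⊕g ⊥ :=
  sumGraph_eq_sum G ⊥

lemma support_sum (A : SimpleGraph α) (B : SimpleGraph β) :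
    (A ⊕g B).support = Sum.inl '' A.support ∪ Sum.inr '' B.support := by
  ext (a | b) <;> simp [mem_support]

lemma copyG_sum_sumCongr (A : SimpleGraph α) (B : SimpleGraph β) (σ : Perm α) :
    copyG (A ⊕g B) (Perm.sumCongr σ (Equiv.refl β)) = copyG A σ ⊕g B := by
  ext (a | b) (a' | b') <;> simp

lemma replaceG_sum_inl (A : SimpleGraph α) (B : SimpleGraph β) (r s k l : α) :
    replaceG (A ⊕g B) (.inl r) (.inl s) (.inl k) (.inl l) = replaceG A r s k l ⊕g B := by
  ext (a | b) (a' | b') <;> simp [replaceG_adj]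
  exact Adj.ne

lemma IsFeasible.sum_inl {A : SimpleGraph α} (B : SimpleGraph β) {r s k l : α}
    (h : IsFeasible A r s k l) : IsFeasible (A ⊕g B) (.inl r) (.inl s) (.inl k) (.inl l) := by
  obtain ⟨hrs, hkl, ⟨f⟩⟩ := h
  refine ⟨by simpa using hrs, by simpa using hkl, ?_⟩
  rw [replaceG_sum_inl]
  exact ⟨f.sumCongr .refl⟩

lemma sumCongr_mem_ampGroup {A : SimpleGraph α} (B : SimpleGraph β) {σ : Perm α}
    (hσ : σ ∈ ampGroup A) : Perm.sumCongr σ (Equiv.refl β) ∈ ampGroup (A ⊕g B) := by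
  refine ampGroup_map_le (f := (Perm.sumCongrHom α β).comp (MonoidHom.inl _ _)) ?_ ⟨σ, hσ, rfl⟩
  rintro τ ⟨r, s, k, l, hf, hcopy⟩
  refine ⟨_, _, _, _, hf.sum_inl B, ?_⟩
  change copyG (A ⊕g B) (Perm.sumCongr τ (Equiv.refl β)) = _
  rw [copyG_sum_sumCongr, hcopy, replaceG_sum_inl]

lemma LocalAmoeba.swap_mem_ampGroup_of_iso [DecidableEq γ] {A : SimpleGraph α}
    {B : SimpleGraph β} {G : SimpleGraph γ} (hA : LocalAmoeba A) (e : A ⊕g B ≃g G) (a b : α) :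
    swap (e (.inl a)) (e (.inl b)) ∈ ampGroup G := by
  classical
  change swap (e.toEquiv _) (e.toEquiv _) ∈ _
  rw [← symm_trans_swap_trans, ← Perm.sumCongr_swap_refl]
  exact permCongr_mem_ampGroup e (sumCongr_mem_ampGroup B (hA ▸ Subgroup.mem_top _))

end Sum

section Swaps

variable {α : Type*} [DecidableEq α] {K : Subgroup (Perm α)}

lemma Subgroup.swap_mem_of_swap_mem_of_swap_mem {x c z : α} (hxc : swap x c ∈ K)
    (hcz : swap c z ∈ K) : swap x z ∈ K := by
  rcases eq_or_ne x c with rfl | hxc'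
  · exact hcz
  rcases eq_or_ne x z with rfl | hxz
  · rw [swap_self]
    exact K.one_mem
  rw [swap_comm, ← swap_mul_swap_mul_swap hxc' hxz]
  exact K.mul_mem (K.mul_mem hcz hxc) hcz

lemma Subgroup.swap_mem_of_swap_mem_of_cover {ι κ : Type*} {f : ι → α} {g : κ → α}
    (hf : ∀ a b, swap (f a) (f b) ∈ K) (hg : ∀ a b, swap (g a) (g b) ∈ K)
    (hcover : ∀ x, x ∈ Set.range f ∨ x ∈ Set.range g) {a₀ : ι} {b₀ : κ} (h₀ : f a₀ = g b₀)
    (x y : α) : swap x y ∈ K := by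
  have hfg (a : ι) (b : κ) : swap (f a) (g b) ∈ K :=
    swap_mem_of_swap_mem_of_swap_mem (hf a a₀) (h₀ ▸ hg b₀ b)
  rcases hcover x with ⟨a, rfl⟩ | ⟨a, rfl⟩ <;> rcases hcover y with ⟨b, rfl⟩ | ⟨b, rfl⟩
  exacts [hf a b, hfg a b, swap_comm (f b) (g a) ▸ hfg b a, hg a b]

lemma Subgroup.exists_mem_eqOn_of_swap_mem (hK : ∀ x y, swap x y ∈ K) (π : Perm α)
    (S : Finset α) : ∃ μ ∈ K, ∀ x ∈ S, μ x = π x := by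
  induction S using Finset.induction_on with
  | empty => exact ⟨1, K.one_mem, by simp⟩
  | insert a S haS ih =>
    obtain ⟨μ, hμK, hμ⟩ := ih
    refine ⟨swap (π a) (μ a) * μ, K.mul_mem (hK _ _) hμK, ?_⟩
    simp only [Finset.mem_insert, forall_eq_or_imp, Perm.mul_apply, swap_apply_right, true_and]
    intro x hx
    have hxa : x ≠ a := ne_of_mem_of_not_mem hx haS
    rw [hμ x hx, swap_apply_of_ne_of_ne (π.injective.ne hxa) (hμ x hx ▸ μ.injective.ne hxa)]

lemma Subgroup.eq_top_of_swap_mem (hK : ∀ x y, swap x y ∈ K) {S : Set α} (hS : S.Finite)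
    (hfix : ∀ ν : Perm α, (∀ x ∈ S, ν x = x) → ν ∈ K) : K = ⊤ := by
  refine eq_top_iff.2 fun π _ => ?_
  obtain ⟨μ, hμK, hμ⟩ := exists_mem_eqOn_of_swap_mem hK π hS.toFinset
  have hν : μ⁻¹ * π ∈ K := hfix _ fun x hx => by
    rw [Perm.mul_apply, ← hμ x (hS.mem_toFinset.2 hx)]
    exact μ.symm_apply_apply x
  simpa using K.mul_mem hμK hν

end Swaps

section Automorphisms

variable {α : Type*} {G : SimpleGraph α}

lemma replaceG_self {r s : α} (h : G.Adj r s) : replaceG G r s r s = G := by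
  rw [replaceG, Set.sdiff_union_self, Set.union_eq_self_of_subset_right (by simpa using h),
    fromEdgeSet_edgeSet]

lemma mem_feasiblePerms_of_copyG_eq {r s : α} (hrs : G.Adj r s) {σ : Perm α}
    (hσ : copyG G σ = G) : σ ∈ feasiblePerms G :=
  ⟨r, s, r, s, ⟨hrs, .inr rfl, by rw [replaceG_self hrs]; exact ⟨.refl⟩⟩,
    by rw [replaceG_self hrs, hσ]⟩

lemma copyG_eq_self_of_forall_mem_support {ν : Perm α} (hν : ∀ x ∈ G.support, ν x = x) :
    copyG G ν = G := by
  have hfix : ∀ {x y}, G.Adj x y → ν x = x := fun h => hν _ ⟨_, h⟩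
  ext x y
  refine ⟨fun h => ?_, fun h => by rwa [copyG_adj, hfix h, hfix h.symm]⟩
  rwa [← ν.injective (hfix h), ← ν.injective (hfix h.symm)]

lemma mem_ampGroup_of_forall_mem_support {r s : α} (hrs : G.Adj r s) {ν : Perm α}
    (hν : ∀ x ∈ G.support, ν x = x) : ν ∈ ampGroup G :=
  Subgroup.subset_closure <|
    mem_feasiblePerms_of_copyG_eq hrs (copyG_eq_self_of_forall_mem_support hν)

lemma LocalAmoeba.exists_adj [Nontrivial α] (hG : LocalAmoeba G) : ∃ r s, G.Adj r s := by
  by_contra! h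
  have hempty : feasiblePerms G = ∅ :=
    Set.eq_empty_of_forall_notMem fun _ ⟨r, s, _, _, hf, _⟩ => h r s hf.1
  rw [LocalAmoeba, ampGroup, hempty, Subgroup.closure_empty] at hG
  exact bot_ne_top hG

end Automorphisms

section FiniteDifference

variable {α : Type*} {G : SimpleGraph α}

lemma copyG_one (G : SimpleGraph α) : copyG G 1 = G := rfl

lemma copyG_mul (G : SimpleGraph α) (σ τ : Perm α) : copyG G (σ * τ) = copyG (copyG G σ) τ :=
  rfl

lemma edgeSet_copyG (G : SimpleGraph α) (σ : Perm α) :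
    (copyG G σ).edgeSet = Sym2.map σ ⁻¹' G.edgeSet := by
  ext ⟨x, y⟩
  rfl

lemma finite_symmDiff_edgeSet_copyG {X Y : SimpleGraph α} (h : (X.edgeSet ∆ Y.edgeSet).Finite)
    (τ : Perm α) : ((copyG X τ).edgeSet ∆ (copyG Y τ).edgeSet).Finite := by
  rw [edgeSet_copyG, edgeSet_copyG, ← Set.preimage_symmDiff]
  exact h.preimage (Sym2.map.injective τ.injective).injOn

def finiteDiffSubgroup (G : SimpleGraph α) : Subgroup (Perm α) where
  carrier := {σ | ((copyG G σ).edgeSet ∆ G.edgeSet).Finite}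
  one_mem' := by simp [copyG_one]
  mul_mem' {σ τ} hσ hτ := by
    refine ((finite_symmDiff_edgeSet_copyG hσ τ).union hτ).subset ?_
    rw [copyG_mul]
    exact symmDiff_triangle _ _ _
  inv_mem' {σ} hσ := by
    have h := finite_symmDiff_edgeSet_copyG (X := G) (Y := copyG G σ)
      (by rwa [symmDiff_comm]) σ⁻¹
    rwa [← copyG_mul, mul_inv_cancel, copyG_one] at h

lemma feasiblePerms_subset_finiteDiffSubgroup (G : SimpleGraph α) :
    feasiblePerms G ⊆ finiteDiffSubgroup G := by
  rintro σ ⟨r, s, k, l, -, hcopy⟩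
  refine (Set.toFinite {s(k, l), s(r, s)}).subset fun e he => ?_
  rw [hcopy, replaceG, edgeSet_fromEdgeSet, Set.mem_symmDiff] at he
  have : e ∈ G.edgeSet → e ∉ Sym2.diagSet := G.not_isDiag_of_mem_edgeSet
  aesop

lemma LocalAmoeba.finite_symmDiff_edgeSet (hG : LocalAmoeba G) (σ : Perm α) :
    ((copyG G σ).edgeSet ∆ G.edgeSet).Finite :=
  (Subgroup.closure_le _).2 (feasiblePerms_subset_finiteDiffSubgroup G)
    (show σ ∈ ampGroup G from hG ▸ Subgroup.mem_top σ)

end FiniteDifference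

section FiniteSupport

variable {α : Type*} {G : SimpleGraph α}

lemma finite_neighborSet_of_forall_finite_symmDiff
    (hdiff : ∀ σ : Perm α, ((copyG G σ).edgeSet ∆ G.edgeSet).Finite) {w : α}
    (hw : w ∉ G.support) (v : α) : (G.neighborSet v).Finite := by
  classical
  refine Set.Finite.of_finite_image (f := fun u => s(v, u)) ((hdiff (swap v w)).subset ?_)
    fun u _ u' _ h => Sym2.congr_right.1 h
  rintro _ ⟨u, hu, rfl⟩
  exact Or.inr ⟨hu, fun h => hw ⟨_, by simpa using h⟩⟩

lemma exists_adj_apart_of_support_infinite (hdeg : ∀ v, (G.neighborSet v).Finite)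
    (hsupp : G.support.Infinite) {F : Set α} (hF : F.Finite) :
    ∃ u v, G.Adj u v ∧ ∀ x ∈ F, ∀ y ∈ ({u, v} : Set α), x ≠ y ∧ ¬G.Adj x y := by
  let nbhd (S : Set α) : Set α := S ∪ ⋃ x ∈ S, G.neighborSet x
  have hnbhd {S : Set α} (hS : S.Finite) : (nbhd S).Finite :=
    hS.union (hS.biUnion fun x _ => hdeg x)
  obtain ⟨u, ⟨v, huv⟩, hu⟩ := (hsupp.sdiff (hnbhd (hnbhd hF))).nonempty
  have hnear {x y : α} (hx : x ∈ F) (h : x = y ∨ G.Adj x y) : y ∈ nbhd F := by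
    rcases h with rfl | h
    · exact .inl hx
    · exact .inr (Set.mem_biUnion hx h)
  refine ⟨u, v, huv, fun x hx y hy => not_or.1 fun h => hu ?_⟩
  rcases hy with rfl | rfl
  · exact .inl (hnear hx h)
  · exact .inr (Set.mem_biUnion (hnear hx h) huv.symm)

lemma exists_seq_adj_apart_of_support_infinite (hdeg : ∀ v, (G.neighborSet v).Finite)
    (hsupp : G.support.Infinite) :
    ∃ a b : ℕ → α, (∀ n, G.Adj (a n) (b n)) ∧ Pairwise fun m n =>
      ∀ x ∈ ({a m, b m} : Set α), ∀ y ∈ ({a n, b n} : Set α), x ≠ y ∧ ¬G.Adj x y := by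
  let Apart (p q : α × α) : Prop :=
    ∀ x ∈ ({p.1, p.2} : Set α), ∀ y ∈ ({q.1, q.2} : Set α), x ≠ y ∧ ¬G.Adj x y
  have : Std.Symm Apart :=
    ⟨fun p q h y hy x hx => ⟨(h x hx y hy).1.symm, fun hyx => (h x hx y hy).2 hyx.symm⟩⟩
  obtain ⟨p, hadj, hapart⟩ := exists_seq_of_forall_finset_exists' (fun p => G.Adj p.1 p.2) Apart
    fun s _ => by
      obtain ⟨u, v, huv, h⟩ := exists_adj_apart_of_support_infinite hdeg hsupp
        ((s.finite_toSet.image Prod.fst).union (s.finite_toSet.image Prod.snd))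
      refine ⟨(u, v), huv, fun q hq x hx => h x ?_⟩
      rcases hx with rfl | rfl
      exacts [.inl ⟨q, hq, rfl⟩, .inr ⟨q, hq, rfl⟩]
  exact ⟨fun n => (p n).1, fun n => (p n).2, hadj, hapart⟩

lemma exists_perm_infinite_symmDiff_of_seq_adj_apart {a b : ℕ → α}
    (hadj : ∀ n, G.Adj (a n) (b n))
    (hapart : Pairwise fun m n =>
      ∀ x ∈ ({a m, b m} : Set α), ∀ y ∈ ({a n, b n} : Set α), x ≠ y ∧ ¬G.Adj x y) :
    ∃ σ : Perm α, ((copyG G σ).edgeSet ∆ G.edgeSet).Infinite := by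
  have hb : Function.Injective b := fun m n h => by
    by_contra hmn
    exact (hapart hmn (b m) (by simp) (b n) (by simp)).1 h
  have hab (m n : ℕ) : a m ≠ b n := by
    rcases eq_or_ne m n with rfl | hmn
    · exact (hadj m).ne
    · exact (hapart hmn (a m) (by simp) (b n) (by simp)).1
  have hflip : Function.Involutive (· ^^^ 1 : ℕ → ℕ) := fun n => by simp
  let σ := (hflip.toPerm _).viaEmbedding ⟨b, hb⟩
  refine ⟨σ, fun hfin => Set.infinite_range_of_injective (f := fun n => s(a n, b n)) ?_
    (hfin.subset ?_)⟩
  · intro m n h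
    rcases Sym2.eq_iff.1 h with ⟨h, -⟩ | ⟨h, -⟩
    · by_contra hmn
      exact (hapart hmn (a m) (by simp) (a n) (by simp)).1 h
    · exact absurd h (hab m n)
  · rintro _ ⟨n, rfl⟩
    have hσa : σ (a n) = a n :=
      Perm.viaEmbedding_apply_of_notMem _ _ _ fun ⟨m, hm⟩ => hab n m hm.symm
    have hσb : σ (b n) = b (n ^^^ 1) := Perm.viaEmbedding_apply _ ⟨b, hb⟩ n
    have hne : n ≠ n ^^^ 1 := fun h => by simpa using congrArg (· ^^^ n) h
    refine Or.inr ⟨hadj n, fun h => (hapart hne (a n) (by simp) (b (n ^^^ 1)) (by simp)).2 ?_⟩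
    simpa [edgeSet_copyG, hσa, hσb] using h

lemma support_finite_of_forall_finite_symmDiff
    (hdiff : ∀ σ : Perm α, ((copyG G σ).edgeSet ∆ G.edgeSet).Finite) {w : α}
    (hw : w ∉ G.support) : G.support.Finite := by
  by_contra hsupp
  obtain ⟨a, b, hadj, hapart⟩ := exists_seq_adj_apart_of_support_infinite
    (finite_neighborSet_of_forall_finite_symmDiff hdiff hw) hsupp
  obtain ⟨σ, hσ⟩ := exists_perm_infinite_symmDiff_of_seq_adj_apart hadj hapart
  exact hσ (hdiff σ)

end FiniteSupport

section DisjointUnion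

variable {α β γ : Type*}

lemma support_finite_of_localAmoeba_addIsolated {G : SimpleGraph α} {t : ℕ}
    (hG : LocalAmoeba (addIsolated G t)) (ht : 0 < t) : G.support.Finite := by
  rw [addIsolated_eq_sum] at hG
  have := support_finite_of_forall_finite_symmDiff hG.finite_symmDiff_edgeSet
    (w := .inr ⟨0, ht⟩) (by simp [support_sum])
  rw [support_sum, support_bot, Set.image_empty, Set.union_empty] at this
  exact this.of_finite_image Sum.inl_injective.injOn

def SimpleGraph.Iso.sumRightComm {A : SimpleGraph α} {B : SimpleGraph β} {C : SimpleGraph γ} :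
    (A ⊕g B) ⊕g C ≃g (A ⊕g C) ⊕g B :=
  Iso.sumAssoc.trans ((Iso.refl.sumCongr Iso.sumComm).trans Iso.sumAssoc.symm)

lemma localAmoeba_addIsolated_sumGraph {H : SimpleGraph α} {H' : SimpleGraph β} {t : ℕ}
    (ht : 2 ≤ t) (hH : LocalAmoeba (addIsolated H t)) (hH' : LocalAmoeba (addIsolated H' t)) :
    LocalAmoeba (addIsolated (sumGraph H H') t) := by
  classical
  have hHfin := support_finite_of_localAmoeba_addIsolated hH (by omega)
  have hH'fin := support_finite_of_localAmoeba_addIsolated hH' (by omega)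
  rw [addIsolated_eq_sum] at hH hH' ⊢
  rw [sumGraph_eq_sum]
  let e₁ : (H ⊕g ⊥) ⊕g H' ≃g (H ⊕g H') ⊕g (⊥ : SimpleGraph (Fin t)) := Iso.sumRightComm.symm
  let e₂ : (H' ⊕g ⊥) ⊕g H ≃g (H ⊕g H') ⊕g (⊥ : SimpleGraph (Fin t)) :=
    Iso.sumRightComm.symm.trans (Iso.sumComm.sumCongr .refl)
  have hswap := Subgroup.swap_mem_of_swap_mem_of_cover (hH.swap_mem_ampGroup_of_iso e₁)
    (hH'.swap_mem_ampGroup_of_iso e₂) (by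
      rintro ((v | w) | i)
      exacts [.inl ⟨.inl v, rfl⟩, .inr ⟨.inl w, rfl⟩, .inl ⟨.inr i, rfl⟩])
    (a₀ := .inr ⟨0, by omega⟩) (b₀ := .inr ⟨0, by omega⟩) rfl
  have hfin : ((H ⊕g H') ⊕g (⊥ : SimpleGraph (Fin t))).support.Finite := by
    rw [support_sum, support_sum, support_bot, Set.image_empty, Set.union_empty]
    exact ((hHfin.image _).union (hH'fin.image _)).image _
  have : Nontrivial (Fin t) := Fin.nontrivial_iff_two_le.2 ht
  have : Nontrivial (α ⊕ Fin t) := Sum.inr_injective.nontrivial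
  obtain ⟨r, s, hrs⟩ := hH.exists_adj
  exact Subgroup.eq_top_of_swap_mem hswap hfin fun ν hν =>
    mem_ampGroup_of_forall_mem_support (e₁.map_adj_iff.2 (sum_adj_inl.2 hrs)) hν

end DisjointUnion

theorem stmt15 {V W : Type*} (H : SimpleGraph V) (H' : SimpleGraph W)
    (hH : GlobalAmoeba H) (hH' : GlobalAmoeba H') :
    GlobalAmoeba (sumGraph H H') := by
  obtain ⟨T, hT⟩ := hH
  obtain ⟨T', hT'⟩ := hH'
  exact ⟨max (max T T') 2, fun t ht =>
    localAmoeba_addIsolated_sumGraph (by omega) (hT t (by omega)) (hT' t (by omega))⟩
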